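/- Let (X,d) be a compact metric space, let (x_i) and (x'_i) be sequences of points of X, and let (p_i) be a fast growing sequence. Write z = z((p_i),(x_i)) and z' = z((p_i),(x'_i)) for the Oxtoby sequences, and let f be a conjugacy from (O̅(z),S) to (O̅(z'),S). Suppose L((x'_i)) contains at least two points. Then there exists i₀ ∈ ℕ such that for all i ≥ i₀, all k ∈ ℤ and all j > i: if [k p_i, (k+1) p_i) ⊆ Per_{p_j}(z) then [k p_i, (k+1) p_i) ⊆ Per_{p_j}(f(z)). -/

import Mathlib

open Filter Topology

section Defs

variable {X : Type*}

/-- The shift by `m`: `(shiftZ m z) n = z (n + m)`, so `shiftZ 1` is the left shift `S`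
and `shiftZ m = S^m`. -/
def shiftZ (m : ℤ) (z : ℤ → X) : ℤ → X := fun n => z (n + m)

/-- `Per_p(z)`: the set of positions `n` such that `z m = z n` for all `m ≡ n (mod p)`. -/
def PerSet (p : ℕ) (z : ℤ → X) : Set ℤ :=
  {n : ℤ | ∀ m : ℤ, (p : ℤ) ∣ m - n → z m = z n}

/-- `Per(z) = ⋃_{p ≥ 1} Per_p(z)`. -/
def PerFull (z : ℤ → X) : Set ℤ := {n : ℤ | ∃ p : ℕ, 1 ≤ p ∧ n ∈ PerSet p z}

/-- A Toeplitz sequence: every position is periodic. -/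
def IsToeplitz (z : ℤ → X) : Prop := ∀ n : ℤ, n ∈ PerFull z

/-- A non-periodic sequence: `S^m z ≠ z` for all `m ≠ 0`. -/
def NonPeriodicSeq (z : ℤ → X) : Prop := ∀ m : ℤ, m ≠ 0 → shiftZ m z ≠ z

/-- `u` and `v` have the same `p`-skeleton. -/
def SamePSkeleton (p : ℕ) (u v : ℤ → X) : Prop :=
  PerSet p u = PerSet p v ∧ ∀ n ∈ PerSet p u, u n = v n

/-- A period structure of a (non-periodic) Toeplitz sequence `z`. -/
def IsPeriodStructure (p : ℕ → ℕ) (z : ℤ → X) : Prop :=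
  (∀ i, 1 ≤ p i) ∧
  (∀ i q, 1 ≤ q → q < p i → PerSet q z ≠ PerSet (p i) z) ∧
  (∀ i, p i ∣ p (i + 1)) ∧
  (∀ n : ℤ, ∃ i, n ∈ PerSet (p i) z)

/-- A fast growing sequence of positive integers. -/
def FastGrowing (p : ℕ → ℕ) : Prop :=
  p 0 = 1 ∧ (∀ i, p i ∣ p (i + 1)) ∧ 3 ≤ p 1 ∧ ∀ i, 3 * p i ≤ p (i + 1)

/-- `oxDefined p i` is the set of positions of the Oxtoby sequence that are filled in
after step `i` of the inductive construction (step `i+1` fills, for each `k ≡ 0` or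
`-1 (mod p_{i+1}/p_i)`, the still-empty positions `J(i,k)` of the block
`[k p_i, (k+1) p_i)`). -/
def oxDefined (p : ℕ → ℕ) : ℕ → Set ℤ
  | 0 => ∅
  | i + 1 =>
      oxDefined p i ∪
        {n : ℤ | ∃ k : ℤ,
          (((p (i + 1) / p i : ℕ) : ℤ) ∣ k ∨ ((p (i + 1) / p i : ℕ) : ℤ) ∣ (k + 1)) ∧
          k * (p i : ℤ) ≤ n ∧ n < (k + 1) * (p i : ℤ) ∧ n ∉ oxDefined p i}

/-- `J(i,k)`: the set of positions in `[k p_i, (k+1) p_i)` still undefined after step `i`. -/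
def oxJ (p : ℕ → ℕ) (i : ℕ) (k : ℤ) : Set ℤ :=
  {n : ℤ | k * (p i : ℤ) ≤ n ∧ n < (k + 1) * (p i : ℤ) ∧ n ∉ oxDefined p i}

/-- The Oxtoby sequence `z((p_i),(x_i))`: position `n` receives the value `x_i` where `i`
is the first step after which `n` is defined. -/
noncomputable def oxtoby (p : ℕ → ℕ) (x : ℕ → X) : ℤ → X :=
  fun n => x (sInf {i : ℕ | n ∈ oxDefined p i})

/-- The reverse of a bi-infinite sequence: `x⁻¹(n) = x(-n)`. -/
def revSeq (z : ℤ → X) : ℤ → X := fun n => z (-n)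

/-- `[n0, n1]` is a maximal `p`-periodic block in `x`. -/
def IsMaxPeriodicBlock (p : ℕ) (x : ℤ → X) (n0 n1 : ℤ) : Prop :=
  n0 ≤ n1 ∧ Set.Icc n0 n1 ⊆ PerSet p x ∧
    ∀ n0' n1' : ℤ, n0' ≤ n0 → n1 ≤ n1' → Set.Icc n0' n1' ⊆ PerSet p x →
      n0' = n0 ∧ n1' = n1

variable [TopologicalSpace X]

/-- The orbit closure of `z` in `X^ℤ` with the product topology. -/
def orbitClosure (z : ℤ → X) : Set (ℤ → X) :=
  closure {y : ℤ → X | ∃ m : ℤ, y = shiftZ m z}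

/-- The ω-limit set of a sequence: all limits of convergent subsequences. -/
def omegaLimitSet (x : ℕ → X) : Set X :=
  {a : X | ∃ φ : ℕ → ℕ, StrictMono φ ∧ Tendsto (x ∘ φ) atTop (𝓝 a)}

/-- Two sequences have the same topological type if exactly the same subsequences
converge. -/
def SameTopType {Y : Type*} [TopologicalSpace Y] (x : ℕ → X) (y : ℕ → Y) : Prop :=
  ∀ φ : ℕ → ℕ, StrictMono φ →
    ((∃ a, Tendsto (x ∘ φ) atTop (𝓝 a)) ↔ (∃ a, Tendsto (y ∘ φ) atTop (𝓝 a)))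

/-- `f` is a conjugacy between the shift-invariant sets `A` and `B`: a homeomorphism
from `A` onto `B` commuting with the shift. -/
def IsConjugacy (A B : Set (ℤ → X)) (f : (ℤ → X) → (ℤ → X)) : Prop :=
  Set.MapsTo f A B ∧ ContinuousOn f A ∧
    (∃ g : (ℤ → X) → (ℤ → X), Set.MapsTo g B A ∧ ContinuousOn g B ∧
      (∀ a ∈ A, g (f a) = a) ∧ (∀ b ∈ B, f (g b) = b)) ∧
    ∀ a ∈ A, f (shiftZ 1 a) = shiftZ 1 (f a)

/-- The `m`-th iterate (for `m : ℤ`) of a self-homeomorphism. -/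
def iterZ {Y : Type*} [TopologicalSpace Y] (f : Y ≃ₜ Y) (m : ℤ) (a : Y) : Y :=
  ((f.toEquiv ^ m : Equiv.Perm Y)) a

end Defs

/-!
Every multiple `m` of `p_i` is the centre of a run `[m - S_i, m + S_i)` of positions filled by
step `i` of the Oxtoby construction, flanked by holes, where `S_i = p_0 + ⋯ + p_{i-1} < p_i / 2`.
Since `x'` has two limit points it is not eventually constant; so a hole of step `j` cannot be
`p_j`-periodic in `z` (that would make `z`, hence `z'`, periodic), i.e. `Per_{p_j}(z)` is the set
of positions filled by step `j`.

The conjugacy is uniformly continuous, so `f(z)(m)` is determined up to `ε` by the window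
`z(m - N), …, z(m + N)`; and `f(z)` lies in the orbit closure of `z'`, so on the positions
filled by step `l` it agrees with `z'` shifted by a phase `ρ_l`. If the window around `m` is
filled by step `l` but `m + ρ_l` is not, then the positions `≡ m (mod p_l)` carry in `f(z)` all
late symbols `x'_μ`, all within `ε` of `f(z)(m)`: impossible. Finally a `p_i`-block filled by
step `j` contains a hole of step `i`, hence lies in a window of some later step and is surrounded
by `S_i ≥ N` filled positions; so its phase shift is filled too and `f(z)` is `p_j`-periodic on it.
-/

namespace FastGrowing

variable {p : ℕ → ℕ}

lemma pos (hp : FastGrowing p) (i : ℕ) : 0 < p i := by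
  induction i with
  | zero => simp [hp.1]
  | succ n ih => have := hp.2.2.2 n; omega

lemma intCast_dvd_of_le (hp : FastGrowing p) {i j : ℕ} (h : i ≤ j) : (p i : ℤ) ∣ p j := by
  induction j, h using Nat.le_induction with
  | base => rfl
  | succ n _ ih => exact ih.trans (Int.natCast_dvd_natCast.mpr (hp.2.1 n))

end FastGrowing

lemma Int.exists_near_mul_iff {a Q n : ℤ} (ha : 0 < a) :
    (∃ c : ℤ, c * (Q * a) - a ≤ n ∧ n < c * (Q * a) + a) ↔
      ∃ k : ℤ, (Q ∣ k ∨ Q ∣ k + 1) ∧ k * a ≤ n ∧ n < (k + 1) * a := by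
  constructor
  · rintro ⟨c, h1, h2⟩
    rcases le_or_gt (c * (Q * a)) n with h | h
    · exact ⟨Q * c, .inl (dvd_mul_right _ _), by linarith, by linarith⟩
    · exact ⟨Q * c - 1, .inr ⟨c, by ring⟩, by linarith, by linarith⟩
  · rintro ⟨k, ⟨c, rfl⟩ | ⟨c, hc⟩, h1, h2⟩
    · exact ⟨c, by linarith, by linarith⟩
    · refine ⟨c, ?_, ?_⟩ <;> nlinarith

lemma Ultrafilter.exists_eventually_dvd_sub {α : Type*} (U : Ultrafilter α) (s : α → ℤ)
    {q : ℕ} (hq : 0 < q) : ∃ r : ℤ, ∀ᶠ t in (U : Filter α), (q : ℤ) ∣ s t - r := by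
  have : NeZero q := ⟨hq.ne'⟩
  obtain ⟨a, ha⟩ := (U.map fun t => (s t : ZMod q)).eq_pure_of_finite
  refine ⟨a.cast, ?_⟩
  have : {a} ∈ U.map fun t => (s t : ZMod q) := by rw [ha]; exact Filter.mem_pure.mpr rfl
  filter_upwards [Ultrafilter.mem_map.mp this] with t ht
  rw [← ZMod.intCast_eq_intCast_iff_dvd_sub, ZMod.intCast_zmod_cast]
  exact ht.symm

section PerSet

variable {X : Type*}

lemma Function.Periodic.mem_perSet {u : ℤ → X} {q : ℕ} (h : Function.Periodic u q)
    (n : ℤ) : n ∈ PerSet q u := by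
  rintro m ⟨t, ht⟩
  rw [show m = n + t * q by linarith]
  exact h.int_mul t n

lemma mem_perSet_of_dvd_sub {q : ℕ} {u : ℤ → X} {m n : ℤ} (hn : n ∈ PerSet q u)
    (hd : (q : ℤ) ∣ m - n) : m ∈ PerSet q u := fun m' hm' => by
  rw [hn m' (by simpa using dvd_add hm' hd), hn m hd]

lemma mem_perSet_of_phase {q : ℕ} {u w : ℤ → X} {ρ : ℤ}
    (hρ : ∀ n, n + ρ ∈ PerSet q u → w n = u (n + ρ)) {n : ℤ} (hn : n + ρ ∈ PerSet q u) :
    n ∈ PerSet q w := fun m hm => by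
  have hm' : m + ρ ∈ PerSet q u := mem_perSet_of_dvd_sub hn (by simpa using hm)
  rw [hρ m hm', hρ n hn, hn _ (by simpa using hm)]

end PerSet

section Oxtoby

open Finset

variable {p : ℕ → ℕ}

def runRadius (p : ℕ → ℕ) (i : ℕ) : ℤ := ∑ l ∈ range i, (p l : ℤ)

/-- The blocks `J(l,k)` filled at step `l + 1`, together with the positions of these blocks
filled before. -/
def oxWindow (p : ℕ → ℕ) (l : ℕ) : Set ℤ :=
  {n | ∃ c : ℤ, c * p (l + 1) - p l ≤ n ∧ n < c * p (l + 1) + p l}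

lemma runRadius_zero : runRadius p 0 = 0 := by simp [runRadius]

lemma runRadius_succ (i : ℕ) : runRadius p (i + 1) = runRadius p i + p i := by
  simp [runRadius, sum_range_succ]

lemma runRadius_nonneg (i : ℕ) : 0 ≤ runRadius p i :=
  sum_nonneg fun _ _ => by positivity

lemma runRadius_mono : Monotone (runRadius p) :=
  monotone_nat_of_le_succ fun i => by simp [runRadius_succ]

lemma le_runRadius (hp : FastGrowing p) (i : ℕ) : (i : ℤ) ≤ runRadius p i := by
  induction i with
  | zero => simp [runRadius_zero]
  | succ n ih => have := hp.pos n; rw [runRadius_succ]; push_cast; omega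

lemma two_mul_runRadius_lt (hp : FastGrowing p) (i : ℕ) : 2 * runRadius p i < p i := by
  induction i with
  | zero => simp [runRadius_zero, hp.1]
  | succ n ih =>
    have : (3 * p n : ℤ) ≤ p (n + 1) := by exact_mod_cast hp.2.2.2 n
    rw [runRadius_succ]; linarith

lemma dvd_runRadius_sub (hp : FastGrowing p) {i j : ℕ} (h : i ≤ j) :
    (p i : ℤ) ∣ runRadius p j - runRadius p i := by
  rw [runRadius, runRadius, ← sum_Ico_eq_sub _ h]
  exact dvd_sum fun l hl => hp.intCast_dvd_of_le (mem_Ico.mp hl).1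

lemma add_runRadius_sub_lt (hp : FastGrowing p) {j l : ℕ} (hjl : j ≤ l) {r : ℤ}
    (hr : r < p j) : r + (runRadius p l - runRadius p j) < p l := by
  rcases hjl.eq_or_lt with rfl | hlt
  · simpa using hr
  · have h1 := runRadius_mono (p := p) hlt
    have h2 := two_mul_runRadius_lt hp l
    rw [runRadius_succ] at h1
    linarith [runRadius_nonneg (p := p) j]

lemma mem_oxWindow_iff (hp : FastGrowing p) {l : ℕ} {n : ℤ} :
    n ∈ oxWindow p l ↔ ∃ k : ℤ,
      (((p (l + 1) / p l : ℕ) : ℤ) ∣ k ∨ ((p (l + 1) / p l : ℕ) : ℤ) ∣ k + 1) ∧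
        k * p l ≤ n ∧ n < (k + 1) * p l := by
  have hq : (((p (l + 1) / p l : ℕ) : ℤ) * p l) = p (l + 1) := by
    exact_mod_cast Nat.div_mul_cancel (hp.2.1 l)
  rw [← Int.exists_near_mul_iff (by exact_mod_cast hp.pos l), hq]
  rfl

lemma oxDefined_eq (hp : FastGrowing p) (j : ℕ) :
    oxDefined p j = {n | ∃ l < j, n ∈ oxWindow p l} := by
  induction j with
  | zero => simp [oxDefined]
  | succ i ih =>
    ext n
    have hsucc : (∃ l < i + 1, n ∈ oxWindow p l) ↔ n ∈ oxDefined p i ∨ n ∈ oxWindow p i := by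
      rw [Nat.exists_lt_succ_right, ih, Set.mem_ofPred]
    rw [Set.mem_ofPred, hsucc, mem_oxWindow_iff hp]
    simp only [oxDefined, Set.mem_union, Set.mem_ofPred]
    by_cases hn : n ∈ oxDefined p i <;> simp [hn]

lemma oxDefined_mono : Monotone (oxDefined p) :=
  monotone_nat_of_le_succ fun _ => Set.subset_union_left

lemma add_mem_oxWindow {l : ℕ} {n d : ℤ} (hd : (p (l + 1) : ℤ) ∣ d) (hn : n ∈ oxWindow p l) :
    n + d ∈ oxWindow p l := by
  obtain ⟨t, rfl⟩ := hd
  obtain ⟨c, h1, h2⟩ := hn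
  exact ⟨c + t, by linarith, by linarith⟩

lemma notMem_oxWindow {l : ℕ} {n v : ℤ} (hv : p l ≤ v) (hv' : v + p l < p (l + 1))
    (hd : (p (l + 1) : ℤ) ∣ n - v) : n ∉ oxWindow p l := by
  obtain ⟨t, ht⟩ := hd
  rintro ⟨c, h1, h2⟩
  rcases le_or_gt (c - t) 0 with h | h
  · nlinarith
  · nlinarith

lemma mem_oxDefined_of_mem_oxWindow (hp : FastGrowing p) {l j : ℕ} (hl : l < j) {n : ℤ}
    (hn : n ∈ oxWindow p l) : n ∈ oxDefined p j := by
  rw [oxDefined_eq hp]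
  exact ⟨l, hl, hn⟩

lemma add_mem_oxDefined_iff (hp : FastGrowing p) {j : ℕ} {n d : ℤ} (hd : (p j : ℤ) ∣ d) :
    n + d ∈ oxDefined p j ↔ n ∈ oxDefined p j := by
  have key : ∀ n d : ℤ, (p j : ℤ) ∣ d → n ∈ oxDefined p j → n + d ∈ oxDefined p j := by
    intro n d hd hn
    rw [oxDefined_eq hp] at hn ⊢
    obtain ⟨l, hl, hW⟩ := hn
    exact ⟨l, hl, add_mem_oxWindow ((hp.intCast_dvd_of_le hl).trans hd) hW⟩
  refine ⟨fun h => ?_, key n d hd⟩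
  simpa using key (n + d) (-d) (dvd_neg.mpr hd) h

lemma mem_oxDefined_of_dvd_sub (hp : FastGrowing p) {j : ℕ} {m n : ℤ}
    (hd : (p j : ℤ) ∣ m - n) (hn : n ∈ oxDefined p j) : m ∈ oxDefined p j := by
  simpa using (add_mem_oxDefined_iff hp hd).mpr hn

lemma mem_oxDefined_of_run (hp : FastGrowing p) (μ : ℕ) {m n : ℤ} (hm : (p μ : ℤ) ∣ m)
    (h1 : m - runRadius p μ ≤ n) (h2 : n < m + runRadius p μ) : n ∈ oxDefined p μ := by
  induction μ generalizing m with
  | zero => simp [runRadius_zero] at h1 h2; omega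
  | succ μ ih =>
    rw [runRadius_succ] at h1 h2
    have hm' : (p μ : ℤ) ∣ m := (hp.intCast_dvd_of_le μ.le_succ).trans hm
    rcases lt_or_ge n (m - p μ) with h | h
    · exact oxDefined_mono μ.le_succ (ih (dvd_sub hm' dvd_rfl) (by linarith) (by linarith))
    rcases lt_or_ge n (m + p μ) with h' | h'
    · obtain ⟨c, rfl⟩ := hm
      exact mem_oxDefined_of_mem_oxWindow hp μ.lt_succ_self ⟨c, by linarith, by linarith⟩
    · exact oxDefined_mono μ.le_succ (ih (dvd_add hm' dvd_rfl) (by linarith) (by linarith))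

lemma add_runRadius_sub_notMem (hp : FastGrowing p) {j ν : ℕ} (hjν : j ≤ ν) {r : ℤ}
    (hr0 : 0 ≤ r) (hr : r < p j) (hrD : r ∉ oxDefined p j) :
    r + (runRadius p ν - runRadius p j) ∉ oxDefined p ν := by
  rw [oxDefined_eq hp]
  rintro ⟨l, hl, hW⟩
  rcases lt_or_ge l j with hlj | hjl
  · refine hrD (mem_oxDefined_of_mem_oxWindow hp hlj ?_)
    have hd : (p (l + 1) : ℤ) ∣ -(runRadius p ν - runRadius p j) :=
      (hp.intCast_dvd_of_le hlj).trans (dvd_runRadius_sub hp hjν).neg_right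
    rw [← add_neg_cancel_right r (runRadius p ν - runRadius p j)]
    exact add_mem_oxWindow hd hW
  · have h1 := add_runRadius_sub_lt hp hjl hr
    have h2 := runRadius_mono (p := p) hjl
    have h3 : (3 * p l : ℤ) ≤ p (l + 1) := by exact_mod_cast hp.2.2.2 l
    have hS := runRadius_succ (p := p) l
    refine notMem_oxWindow (v := r + (runRadius p (l + 1) - runRadius p j)) (by linarith)
      (by linarith) ?_ hW
    rw [show r + (runRadius p ν - runRadius p j) - (r + (runRadius p (l + 1) - runRadius p j))
      = runRadius p ν - runRadius p (l + 1) by ring]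
    exact dvd_runRadius_sub hp hl

lemma runRadius_notMem (hp : FastGrowing p) (j : ℕ) : runRadius p j ∉ oxDefined p j := by
  simpa [runRadius_zero] using
    add_runRadius_sub_notMem hp (Nat.zero_le j) le_rfl (by simp [hp.1]) (by simp [oxDefined])

lemma exists_mem_oxDefined_succ_notMem (hp : FastGrowing p) {j ν : ℕ} (hjν : j ≤ ν) {r : ℤ}
    (hr : r ∉ oxDefined p j) :
    ∃ m, (p j : ℤ) ∣ m - r ∧ m ∈ oxDefined p (ν + 1) ∧ m ∉ oxDefined p ν := by
  have hpj : (0 : ℤ) < p j := by exact_mod_cast hp.pos j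
  have hr₀ : (p j : ℤ) ∣ r % p j - r := Int.dvd_emod_sub_self
  have hr₀D : r % p j ∉ oxDefined p j := fun h =>
    hr (mem_oxDefined_of_dvd_sub hp (dvd_sub_comm.mp hr₀) h)
  have h0 := Int.emod_nonneg r hpj.ne'
  have h1 := Int.emod_lt_of_pos r hpj
  refine ⟨r % p j + (runRadius p ν - runRadius p j), ?_,
    mem_oxDefined_of_mem_oxWindow hp ν.lt_succ_self ⟨0, ?_, ?_⟩,
    add_runRadius_sub_notMem hp hjν h0 h1 hr₀D⟩
  · rw [show r % p j + (runRadius p ν - runRadius p j) - r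
      = (r % p j - r) + (runRadius p ν - runRadius p j) by ring]
    exact dvd_add hr₀ (dvd_runRadius_sub hp hjν)
  · linarith [runRadius_mono (p := p) hjν, hp.pos ν]
  · linarith [add_runRadius_sub_lt hp hjν h1, hp.pos ν]

noncomputable def oxLevel (p : ℕ → ℕ) (n : ℤ) : ℕ := sInf {i | n ∈ oxDefined p i}

lemma exists_mem_oxDefined (hp : FastGrowing p) (n : ℤ) : ∃ j, n ∈ oxDefined p j := by
  have := le_runRadius hp (n.natAbs + 1)
  push_cast at this
  refine ⟨n.natAbs + 1, mem_oxDefined_of_run hp _ (dvd_zero _) ?_ ?_⟩ <;>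
    linarith [le_abs_self n, neg_abs_le n]

lemma mem_oxDefined_oxLevel (hp : FastGrowing p) (n : ℤ) : n ∈ oxDefined p (oxLevel p n) :=
  Nat.sInf_mem (exists_mem_oxDefined hp n)

lemma lt_oxLevel (hp : FastGrowing p) {j : ℕ} {n : ℤ} (hn : n ∉ oxDefined p j) :
    j < oxLevel p n :=
  lt_of_not_ge fun h => hn (oxDefined_mono h (mem_oxDefined_oxLevel hp n))

lemma oxLevel_eq {ν : ℕ} {n : ℤ} (h1 : n ∈ oxDefined p (ν + 1)) (h2 : n ∉ oxDefined p ν) :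
    oxLevel p n = ν + 1 := by
  have hne : {i | n ∈ oxDefined p i}.Nonempty := ⟨ν + 1, h1⟩
  exact le_antisymm (Nat.sInf_le h1) (Nat.succ_le_of_lt (lt_of_not_ge fun h =>
    h2 (oxDefined_mono h (Nat.sInf_mem hne))))

lemma oxLevel_eq_of_dvd_sub (hp : FastGrowing p) {j : ℕ} {m n : ℤ} (hn : n ∈ oxDefined p j)
    (hd : (p j : ℤ) ∣ m - n) : oxLevel p m = oxLevel p n := by
  have hm : m ∈ oxDefined p j := mem_oxDefined_of_dvd_sub hp hd hn
  refine congrArg sInf (Set.ext fun i => ?_)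
  rcases le_total i j with hij | hji
  · have hd' := (hp.intCast_dvd_of_le hij).trans hd
    exact ⟨mem_oxDefined_of_dvd_sub hp (dvd_sub_comm.mp hd'), mem_oxDefined_of_dvd_sub hp hd'⟩
  · exact iff_of_true (oxDefined_mono hji hm) (oxDefined_mono hji hn)

lemma oxDefined_subset_perSet (hp : FastGrowing p) {X : Type*} (x : ℕ → X) (j : ℕ) :
    oxDefined p j ⊆ PerSet (p j) (oxtoby p x) := fun _ hn _ hd =>
  congrArg x (oxLevel_eq_of_dvd_sub hp hn hd)

lemma mem_oxWindow_of_mem_Ico (hp : FastGrowing p) {i l : ℕ} (hil : i ≤ l) {k n n' : ℤ}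
    (hn : n ∈ Set.Ico (k * p i) ((k + 1) * p i)) (hn' : n' ∈ Set.Ico (k * p i) ((k + 1) * p i))
    (hW : n ∈ oxWindow p l) : n' ∈ oxWindow p l := by
  obtain ⟨c, h1, h2⟩ := hW
  have hpi : (0 : ℤ) < p i := by exact_mod_cast hp.pos i
  have hP : (p i : ℤ) ∣ c * p (l + 1) :=
    dvd_mul_of_dvd_right (hp.intCast_dvd_of_le (hil.trans l.le_succ)) c
  obtain ⟨a, ha⟩ := dvd_sub hP (hp.intCast_dvd_of_le hil)
  obtain ⟨b, hb⟩ := dvd_add hP (hp.intCast_dvd_of_le hil)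
  obtain ⟨hn1, hn2⟩ := hn
  obtain ⟨hn1', hn2'⟩ := hn'
  have hak : a ≤ k := Int.lt_add_one_iff.mp (lt_of_mul_lt_mul_left (by linarith) hpi.le)
  have hkb : k + 1 ≤ b := Int.add_one_le_iff.mpr (lt_of_mul_lt_mul_left (by linarith) hpi.le)
  exact ⟨c, by nlinarith, by nlinarith⟩

lemma add_mem_oxDefined_of_mem_oxWindow (hp : FastGrowing p) {l : ℕ} {n t : ℤ}
    (hn : n ∈ oxWindow p l) (ht : |t| ≤ runRadius p l) : n + t ∈ oxDefined p (l + 1) := by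
  obtain ⟨c, h1, h2⟩ := hn
  rw [abs_le] at ht
  exact mem_oxDefined_of_run hp (l + 1) (dvd_mul_left _ c) (by rw [runRadius_succ]; linarith)
    (by rw [runRadius_succ]; linarith)

lemma add_mem_oxDefined_of_Ico_subset (hp : FastGrowing p) {i j : ℕ} {k : ℤ}
    (hB : Set.Ico (k * p i) ((k + 1) * p i) ⊆ oxDefined p j) {n t : ℤ}
    (hn : n ∈ Set.Ico (k * p i) ((k + 1) * p i)) (ht : |t| ≤ runRadius p i) :
    n + t ∈ oxDefined p j := by
  have hhole : k * p i + runRadius p i ∈ Set.Ico (k * p i) ((k + 1) * p i) :=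
    ⟨by linarith [runRadius_nonneg (p := p) i], by
      linarith [runRadius_nonneg (p := p) i, two_mul_runRadius_lt hp i]⟩
  have hmem := hB hhole
  rw [oxDefined_eq hp] at hmem
  obtain ⟨l, hl, hW⟩ := hmem
  have hil : i ≤ l := by
    by_contra! hli
    exact runRadius_notMem hp i (mem_oxDefined_of_dvd_sub hp ⟨-k, by ring⟩
      (mem_oxDefined_of_mem_oxWindow hp hli hW))
  exact oxDefined_mono hl (add_mem_oxDefined_of_mem_oxWindow hp
    (mem_oxWindow_of_mem_Ico hp hil hhole hn hW) (ht.trans (runRadius_mono hil)))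

section Values

variable {X : Type*} {x : ℕ → X}

lemma eq_oxtoby_of_mem_perSet (hp : FastGrowing p) {j μ : ℕ} (hμ : j < μ) {r : ℤ}
    (hr : r ∈ PerSet (p j) (oxtoby p x)) (hrD : r ∉ oxDefined p j) : x μ = oxtoby p x r := by
  obtain ⟨ν, rfl⟩ : ∃ ν, μ = ν + 1 := ⟨μ - 1, by omega⟩
  obtain ⟨m, hd, h1, h2⟩ := exists_mem_oxDefined_succ_notMem hp (Nat.le_of_lt_succ hμ) hrD
  rw [← hr m hd]
  exact congrArg x (oxLevel_eq h1 h2).symm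

lemma periodic_oxtoby_of_mem_perSet (hp : FastGrowing p) {j : ℕ} {r : ℤ}
    (hr : r ∈ PerSet (p j) (oxtoby p x)) (hrD : r ∉ oxDefined p j) :
    Function.Periodic (oxtoby p x) (p j) := by
  intro n
  by_cases hn : n ∈ oxDefined p j
  · exact oxDefined_subset_perSet hp x j hn _ (by simp)
  · have hn' : n + p j ∉ oxDefined p j := by rwa [add_mem_oxDefined_iff hp dvd_rfl]
    show x (oxLevel p (n + p j)) = x (oxLevel p n)
    rw [eq_oxtoby_of_mem_perSet hp (lt_oxLevel hp hn') hr hrD,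
      eq_oxtoby_of_mem_perSet hp (lt_oxLevel hp hn) hr hrD]

lemma eq_oxtoby_of_periodic (hp : FastGrowing p) {j μ : ℕ} (hμ : j < μ)
    (h : Function.Periodic (oxtoby p x) (p j)) : x μ = oxtoby p x (runRadius p j) :=
  eq_oxtoby_of_mem_perSet hp hμ (h.mem_perSet _) (runRadius_notMem hp j)

end Values

end Oxtoby

section Dynamics

variable {X : Type*}

lemma shiftZ_shiftZ (a b : ℤ) (z : ℤ → X) : shiftZ a (shiftZ b z) = shiftZ (a + b) z := by
  funext n; simp [shiftZ, add_assoc, add_comm a]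

@[simp]
lemma shiftZ_zero (z : ℤ → X) : shiftZ 0 z = z := by
  funext n; simp [shiftZ]

lemma shiftZ_eq_self_iff {q : ℤ} {u : ℤ → X} : shiftZ q u = u ↔ Function.Periodic u q :=
  funext_iff

variable [TopologicalSpace X]

lemma continuous_shiftZ (m : ℤ) : Continuous (shiftZ m : (ℤ → X) → ℤ → X) :=
  continuous_pi fun n => continuous_apply (n + m)

lemma self_mem_orbitClosure (z : ℤ → X) : z ∈ orbitClosure z :=
  subset_closure ⟨0, (shiftZ_zero z).symm⟩

lemma shiftZ_mem_orbitClosure {z u : ℤ → X} (m : ℤ) (hu : u ∈ orbitClosure z) :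
    shiftZ m u ∈ orbitClosure z :=
  map_mem_closure (continuous_shiftZ m) hu fun _ ⟨m', hm'⟩ => ⟨m + m', by rw [hm', shiftZ_shiftZ]⟩

lemma IsConjugacy.map_shiftZ {z : ℤ → X} {B : Set (ℤ → X)} {f : (ℤ → X) → ℤ → X}
    (hf : IsConjugacy (orbitClosure z) B f) (m : ℤ) {a : ℤ → X} (ha : a ∈ orbitClosure z) :
    f (shiftZ m a) = shiftZ m (f a) := by
  obtain ⟨-, -, -, hshift⟩ := hf
  induction m using Int.induction_on generalizing a with
  | zero => simp
  | succ i ih =>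
    rw [add_comm (i : ℤ) 1, ← shiftZ_shiftZ, ← shiftZ_shiftZ,
      hshift _ (shiftZ_mem_orbitClosure _ ha), ih ha]
  | pred i ih =>
    have key := hshift _ (shiftZ_mem_orbitClosure (-i - 1) ha)
    rw [shiftZ_shiftZ, show (1 + (-i - 1) : ℤ) = -i by ring, ih ha] at key
    calc f (shiftZ (-i - 1) a) = shiftZ (-1) (shiftZ 1 (f (shiftZ (-i - 1) a))) := by
          rw [shiftZ_shiftZ, neg_add_cancel, shiftZ_zero]
      _ = shiftZ (-i - 1) (f a) := by
          rw [← key, shiftZ_shiftZ]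
          congr 1
          ring

lemma IsConjugacy.periodic [T2Space X] {z z' : ℤ → X} {f : (ℤ → X) → ℤ → X}
    (hf : IsConjugacy (orbitClosure z) (orbitClosure z') f) {q : ℤ}
    (h : Function.Periodic z q) : Function.Periodic z' q := by
  obtain ⟨g, hg, -, -, hfg⟩ := hf.2.2.1
  have hA : orbitClosure z ⊆ {u | shiftZ q u = u} := by
    refine closure_minimal ?_ (isClosed_eq (continuous_shiftZ q) continuous_id)
    rintro _ ⟨m, rfl⟩
    rw [Set.mem_ofPred, shiftZ_shiftZ, add_comm, ← shiftZ_shiftZ, shiftZ_eq_self_iff.mpr h]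
  have hz' := self_mem_orbitClosure z'
  rw [← shiftZ_eq_self_iff, ← hfg z' hz', ← hf.map_shiftZ q (hg hz'), hA (hg hz')]

lemma exists_phase [T2Space X] {z w : ℤ → X} (hw : w ∈ orbitClosure z) {q : ℕ → ℕ}
    (hq : ∀ l, 0 < q l) :
    ∃ ρ : ℕ → ℤ, (∀ l l', (q l : ℤ) ∣ q l' → (q l : ℤ) ∣ ρ l' - ρ l) ∧
      ∀ l n, n + ρ l ∈ PerSet (q l) z → w n = z (n + ρ l) := by
  have hw' : MapClusterPt w ⊤ fun m => shiftZ m z := by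
    rw [MapClusterPt, Filter.map_top, ← mem_closure_iff_clusterPt]
    simpa only [orbitClosure, Set.range, eq_comm] using hw
  obtain ⟨U, -, hU⟩ := mapClusterPt_iff_ultrafilter.mp hw'
  -- the ultrafilter picks one residue of the shift modulo every `q l` at once
  choose ρ hρ using fun l => U.exists_eventually_dvd_sub id (hq l)
  refine ⟨ρ, fun l l' hll' => ?_, fun l n hn => ?_⟩
  · obtain ⟨m, hm, hm'⟩ := ((hρ l).and (hρ l')).exists
    simpa using dvd_sub hm (hll'.trans hm')
  · refine tendsto_nhds_unique (tendsto_pi_nhds.mp hU n) (tendsto_const_nhds.congr' ?_)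
    filter_upwards [hρ l] with m hm
    exact (hn _ (by simpa using hm)).symm

end Dynamics

section Metric

variable {X : Type*}

lemma exists_window_dist_lt [UniformSpace X] {Y : Type*} [PseudoMetricSpace Y]
    {A : Set (ℤ → X)} (hA : IsCompact A) {F : (ℤ → X) → Y} (hF : ContinuousOn F A) {ε : ℝ}
    (hε : 0 < ε) : ∃ N : ℕ, ∀ u ∈ A, ∀ v ∈ A, (∀ n : ℤ, |n| ≤ N → u n = v n) →
      dist (F u) (F v) < ε := by
  have hU := hA.uniformContinuousOn_of_continuous hF (Metric.dist_mem_uniformity hε)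
  rw [Filter.mem_map, mem_inf_principal, Pi.uniformity, Filter.mem_iInf] at hU
  obtain ⟨I, hI, V, hV, hUV⟩ := hU
  obtain ⟨N, hN⟩ := (hI.image Int.natAbs).bddAbove
  refine ⟨N, fun u hu v hv huv => ?_⟩
  have : (u, v) ∈ ⋂ i, V i := Set.mem_iInter.mpr fun i => by
    obtain ⟨W, hW, hWV⟩ := hV i
    refine hWV ?_
    show (u i, v i) ∈ W
    rw [huv i (by rw [Int.abs_eq_natAbs]; exact_mod_cast hN ⟨i, i.2, rfl⟩)]
    exact refl_mem_uniformity hW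
  rw [← hUV] at this
  exact this ⟨hu, hv⟩

lemma IsConjugacy.exists_window [MetricSpace X] [CompactSpace X] {z : ℤ → X}
    {B : Set (ℤ → X)} {f : (ℤ → X) → ℤ → X} (hf : IsConjugacy (orbitClosure z) B f) {ε : ℝ}
    (hε : 0 < ε) : ∃ N : ℕ, ∀ m m' : ℤ, (∀ n : ℤ, |n| ≤ N → z (n + m) = z (n + m')) →
      dist (f z m) (f z m') < ε := by
  obtain ⟨N, hN⟩ := exists_window_dist_lt isClosed_closure.isCompact
    ((continuous_apply 0).comp_continuousOn hf.2.1) hε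
  refine ⟨N, fun m m' h => ?_⟩
  have hz := self_mem_orbitClosure z
  simpa [hf.map_shiftZ, hz, shiftZ] using
    hN _ (shiftZ_mem_orbitClosure m hz) _ (shiftZ_mem_orbitClosure m' hz) h

lemma exists_pos_frequently_le_dist [MetricSpace X] {x : ℕ → X}
    (hx : (omegaLimitSet x).Nontrivial) :
    ∃ ε > 0, ∀ c, ∃ᶠ μ in atTop, ε ≤ dist c (x μ) := by
  obtain ⟨a, ⟨φ, hφ, ha⟩, b, ⟨ψ, hψ, hb⟩, hab⟩ := hx
  have hab' : 0 < dist a b := dist_pos.mpr hab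
  refine ⟨dist a b / 3, by positivity, fun c hc => ?_⟩
  have hball : ∀ {θ : ℕ → ℕ} {e : X}, StrictMono θ → Tendsto (x ∘ θ) atTop (𝓝 e) →
      dist e c ≤ dist a b / 3 := fun hθ he => by
    refine le_of_tendsto (he.dist tendsto_const_nhds) ?_
    filter_upwards [hθ.tendsto_atTop.eventually hc] with μ hμ
    rw [Function.comp_apply, dist_comm]
    exact (not_le.mp hμ).le
  linarith [dist_triangle a c b, hball hφ ha, hball hψ hb, dist_comm c b]

end Metric

section Conjugacy

variable {X : Type*} [MetricSpace X] {p : ℕ → ℕ} {x x' : ℕ → X}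

lemma perSet_subset_oxDefined (hp : FastGrowing p) {f : (ℤ → X) → ℤ → X}
    (hf : IsConjugacy (orbitClosure (oxtoby p x)) (orbitClosure (oxtoby p x')) f)
    (hx' : ∀ c, ∃ᶠ μ in atTop, x' μ ≠ c) (j : ℕ) :
    PerSet (p j) (oxtoby p x) ⊆ oxDefined p j := fun n hn => by
  by_contra hnD
  have hper := hf.periodic (periodic_oxtoby_of_mem_perSet hp hn hnD)
  obtain ⟨μ, hne, hμ⟩ :=
    ((hx' (oxtoby p x' (runRadius p j))).and_eventually (eventually_gt_atTop j)).exists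
  exact hne (eq_oxtoby_of_periodic hp hμ hper)

lemma add_phase_mem_oxDefined (hp : FastGrowing p) {w : ℤ → X} {ε : ℝ}
    (hx' : ∀ c, ∃ᶠ μ in atTop, ε ≤ dist c (x' μ)) {ρ : ℕ → ℤ}
    (hρc : ∀ l l', (p l : ℤ) ∣ p l' → (p l : ℤ) ∣ ρ l' - ρ l)
    (hρ : ∀ l n, n + ρ l ∈ PerSet (p l) (oxtoby p x') → w n = oxtoby p x' (n + ρ l))
    {N : ℕ} (hN : ∀ m m', (∀ n : ℤ, |n| ≤ N → oxtoby p x (n + m) = oxtoby p x (n + m')) →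
      dist (w m) (w m') < ε)
    {l : ℕ} {m : ℤ} (hm : ∀ n : ℤ, |n| ≤ N → n + m ∈ oxDefined p l) :
    m + ρ l ∈ oxDefined p l := by
  by_contra hhole
  refine hx' (w m) ?_
  filter_upwards [eventually_gt_atTop l] with μ hμ
  obtain ⟨ν, rfl⟩ : ∃ ν, μ = ν + 1 := ⟨μ - 1, by omega⟩
  have hρν : (p l : ℤ) ∣ ρ (ν + 1) - ρ l := hρc l (ν + 1) (hp.intCast_dvd_of_le hμ.le)
  have hhole' : m + ρ (ν + 1) ∉ oxDefined p l := fun h =>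
    hhole (mem_oxDefined_of_dvd_sub hp (by simpa using hρν.neg_right) h)
  obtain ⟨m', hd, h1, h2⟩ := exists_mem_oxDefined_succ_notMem hp (Nat.le_of_lt_succ hμ) hhole'
  have hclose : dist (w m) (w (m' - ρ (ν + 1))) < ε := hN _ _ fun n hn =>
    (oxDefined_subset_perSet hp x l (hm n hn) _ (by convert hd using 1; ring)).symm
  have hval : w (m' - ρ (ν + 1)) = x' (ν + 1) := by
    rw [hρ (ν + 1) _ (by simpa using oxDefined_subset_perSet hp x' _ h1), sub_add_cancel]
    exact congrArg x' (oxLevel_eq h1 h2)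
  rw [← hval]
  exact not_le.mpr hclose

end Conjugacy

/-- Lemma `L4`: if `L((x'_i))` has at least two points and `f` is a
conjugacy between the Oxtoby systems of `z` and `z'`, then there is `i₀` such that for
all `i ≥ i₀`, `k ∈ ℤ`, `j > i`: `[k p_i,(k+1) p_i) ⊆ Per_{p_j}(z)` implies
`[k p_i,(k+1) p_i) ⊆ Per_{p_j}(f(z))`. -/
theorem oxtoby_conjugacy_periodic_blocks {X : Type*} [MetricSpace X] [CompactSpace X]
    (x x' : ℕ → X) (p : ℕ → ℕ) (hp : FastGrowing p)
    (hL' : (omegaLimitSet x').Nontrivial)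
    (f : (ℤ → X) → (ℤ → X))
    (hf : IsConjugacy (orbitClosure (oxtoby p x)) (orbitClosure (oxtoby p x')) f) :
    ∃ i₀ : ℕ, ∀ i : ℕ, i₀ ≤ i → ∀ k : ℤ, ∀ j : ℕ, i < j →
      Set.Ico (k * (p i : ℤ)) ((k + 1) * (p i : ℤ)) ⊆ PerSet (p j) (oxtoby p x) →
      Set.Ico (k * (p i : ℤ)) ((k + 1) * (p i : ℤ)) ⊆ PerSet (p j) (f (oxtoby p x)) := by
  obtain ⟨ε, hε, hx'⟩ := exists_pos_frequently_le_dist hL'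
  obtain ⟨ρ, hρc, hρ⟩ := exists_phase (hf.1 (self_mem_orbitClosure (oxtoby p x))) hp.pos
  obtain ⟨N, hN⟩ := hf.exists_window hε
  have hskel : ∀ j, PerSet (p j) (oxtoby p x) ⊆ oxDefined p j :=
    perSet_subset_oxDefined hp hf fun c => (hx' c).mono fun μ h hμ => by
      rw [hμ, dist_self] at h; linarith
  refine ⟨N, fun i hi k j _ hB n hn => mem_perSet_of_phase (hρ j) ?_⟩
  refine oxDefined_subset_perSet hp x' j (add_phase_mem_oxDefined hp hx' hρc hρ hN fun t ht => ?_)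
  rw [add_comm]
  exact add_mem_oxDefined_of_Ico_subset hp (hB.trans (hskel j)) hn
    (ht.trans (by linarith [le_runRadius hp i, (Nat.cast_le (α := ℤ)).mpr hi]))
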